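/- arXiv:2505.17046 — 2 statements merged into one kernel-verified Lean document; each statement's English description precedes it below -/
import Mathlib

section
/- Let c ≥ 2 and let A = Δ_DD ⊗ I_{2^c} + I_{2^c} ⊗ Δ_DD be the 2D discrete Dirichlet Laplacian, where Δ_DD = D^{(c)}_{−2,1,1} and I_{2^c} is the 2^c × 2^c identity. Then A admits an operator tensor-train (MPO) representation of bond dimension at most 6 with 2c cores in serial ordering: there exist u, w ∈ ℝ^6 and matrices M_k^{x,y} ∈ ℝ^{6×6} for k = 1,…,2c and x, y ∈ {0,1} such that for all row index with binary digits x_1,…,x_{2c} and column index with binary digits y_1,…,y_{2c} (most significant first, the first c digits indexing the first Kronecker factor and the last c digits the second), the corresponding entry of A equals uᵀ M_1^{x_1,y_1} M_2^{x_2,y_2} ⋯ M_{2c}^{x_{2c},y_{2c}} w. -/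
/- STATEMENT 3: the 2D discrete Dirichlet Laplacian
   `A = Δ_DD ⊗ I_{2^c} + I_{2^c} ⊗ Δ_DD`, `Δ_DD = D^{(c)}_{−2,1,1}`, admits an
   MPO (operator tensor-train) representation with 2c cores of bond dimension
   at most 6 in serial ordering. -/

open Matrix Kronecker

noncomputable section

/-- The `2^c × 2^c` tridiagonal Toeplitz matrix with diagonal `α`,
    superdiagonal `β` and subdiagonal `γ`. -/
def triD (c : ℕ) (α β γ : ℝ) : Matrix (Fin (2 ^ c)) (Fin (2 ^ c)) ℝ :=
  Matrix.of fun i j =>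
    if (i : ℕ) = (j : ℕ) then α
    else if (j : ℕ) = (i : ℕ) + 1 then β
    else if (i : ℕ) = (j : ℕ) + 1 then γ
    else 0

/-- Index identification `Fin (2^c) × Fin (2^c) ≃ Fin (2^(2c))`, the first
    factor being the most significant (serial ordering: the first `c` binary
    digits index the first Kronecker factor). -/
def idx2 (c : ℕ) : Fin (2 ^ c) × Fin (2 ^ c) ≃ Fin (2 ^ (2 * c)) :=
  finProdFinEquiv.trans (finCongr (by rw [← pow_add]; congr 1; omega))

namespace MPO

def db (x y : Bool) : ℝ := if x = y then 1 else 0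
def s01 (x y : Bool) : ℝ := if x = false ∧ y = true then 1 else 0
def s10 (x y : Bool) : ℝ := if x = true ∧ y = false then 1 else 0

def ie (a b : ℕ) : ℝ := if a = b then 1 else 0
def dfun (a b : ℕ) : ℝ :=
  (if a = b then (-2 : ℝ) else 0) + (if b = a + 1 then 1 else 0) + (if a = b + 1 then 1 else 0)
def ff (n a b : ℕ) : ℝ := if a = 2 ^ n - 1 ∧ b = 0 then 1 else 0
def gg (n a b : ℕ) : ℝ := if a = 0 ∧ b = 2 ^ n - 1 then 1 else 0

def Bcore (x y : Bool) : Matrix (Fin 6) (Fin 6) ℝ :=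
  Matrix.of
    ![![db x y, 0, 0, 0, 0, 0],
      ![0, db x y, s01 x y, s10 x y, 0, 0],
      ![0, 0, s10 x y, 0, 0, 0],
      ![0, 0, 0, s01 x y, 0, 0],
      ![0, 0, 0, 0, 0, 0],
      ![0, 0, 0, 0, 0, 0]]

def Fcore (x y : Bool) : Matrix (Fin 6) (Fin 6) ℝ :=
  Matrix.of
    ![![db x y, s01 x y, s10 x y, 0, 0, 0],
      ![0, s10 x y, 0, 0, 0, 0],
      ![0, 0, s01 x y, 0, 0, 0],
      ![0, 0, 0, 0, 0, 0],
      ![0, 0, 0, 0, 0, 0],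
      ![0, 0, 0, 0, 0, 0]]

def Ccore (x y : Bool) : Matrix (Fin 6) (Fin 6) ℝ :=
  Matrix.of
    ![![(-2) * db x y + s01 x y + s10 x y, db x y, 0, 0, 0, 0],
      ![s10 x y, 0, 0, 0, 0, 0],
      ![s01 x y, 0, 0, 0, 0, 0],
      ![0, 0, 0, 0, 0, 0],
      ![0, 0, 0, 0, 0, 0],
      ![0, 0, 0, 0, 0, 0]]

def vec2 (n a b : ℕ) : Fin 6 → ℝ := ![ie a b, dfun a b, ff n a b, gg n a b, 0, 0]

def wv : Fin 6 → ℝ := ![1, -2, 1, 1, 0, 0]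

-- arithmetic recurrences
lemma ie_rec (n : ℕ) (X Y : Bool) (a b : ℕ) (ha : a < 2 ^ n) (hb : b < 2 ^ n) :
    ie (cond X (2 ^ n) 0 + a) (cond Y (2 ^ n) 0 + b) = db X Y * ie a b := by
  have h1 : 0 < 2 ^ n := Nat.two_pow_pos n
  simp only [ie, db]
  generalize (2 : ℕ) ^ n = N at *
  cases X <;> cases Y <;> simp <;> (try split_ifs) <;> (try intros) <;>
    first | rfl | omega | norm_num | (exfalso; omega)

lemma dfun_rec (n : ℕ) (X Y : Bool) (a b : ℕ) (ha : a < 2 ^ n) (hb : b < 2 ^ n) :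
    dfun (cond X (2 ^ n) 0 + a) (cond Y (2 ^ n) 0 + b)
      = db X Y * dfun a b + s01 X Y * ff n a b + s10 X Y * gg n a b := by
  have h1 : 0 < 2 ^ n := Nat.two_pow_pos n
  simp only [dfun, db, s01, s10, ff, gg]
  generalize (2 : ℕ) ^ n = N at *
  cases X <;> cases Y <;> simp <;> (try split_ifs) <;> (try intros) <;>
    first | rfl | omega | norm_num | (exfalso; omega)

lemma ff_rec (n : ℕ) (X Y : Bool) (a b : ℕ) (ha : a < 2 ^ n) (hb : b < 2 ^ n) :
    ff (n + 1) (cond X (2 ^ n) 0 + a) (cond Y (2 ^ n) 0 + b) = s10 X Y * ff n a b := by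
  have h1 : 0 < 2 ^ n := Nat.two_pow_pos n
  simp only [ff, s10, pow_succ]
  generalize (2 : ℕ) ^ n = N at *
  cases X <;> cases Y <;> simp <;> (try split_ifs) <;> (try intros) <;>
    first | rfl | omega | norm_num | (exfalso; omega)

lemma gg_rec (n : ℕ) (X Y : Bool) (a b : ℕ) (ha : a < 2 ^ n) (hb : b < 2 ^ n) :
    gg (n + 1) (cond X (2 ^ n) 0 + a) (cond Y (2 ^ n) 0 + b) = s01 X Y * gg n a b := by
  have h1 : 0 < 2 ^ n := Nat.two_pow_pos n
  simp only [gg, s01, pow_succ]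
  generalize (2 : ℕ) ^ n = N at *
  cases X <;> cases Y <;> simp <;> (try split_ifs) <;> (try intros) <;>
    first | rfl | omega | norm_num | (exfalso; omega)

@[simp] lemma cv0 {α : Type*} (a b c d e f : α) : ![a, b, c, d, e, f] 0 = a := rfl
@[simp] lemma cv1 {α : Type*} (a b c d e f : α) : ![a, b, c, d, e, f] 1 = b := rfl
@[simp] lemma cv2 {α : Type*} (a b c d e f : α) : ![a, b, c, d, e, f] 2 = c := rfl
@[simp] lemma cv3 {α : Type*} (a b c d e f : α) : ![a, b, c, d, e, f] 3 = d := rfl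
@[simp] lemma cv4 {α : Type*} (a b c d e f : α) : ![a, b, c, d, e, f] 4 = e := rfl
@[simp] lemma cv5 {α : Type*} (a b c d e f : α) : ![a, b, c, d, e, f] 5 = f := rfl

@[simp] lemma cvm0 {α : Type*} (a b c d e f : α) (h : 0 < 6) : ![a, b, c, d, e, f] ⟨0, h⟩ = a := rfl
@[simp] lemma cvm1 {α : Type*} (a b c d e f : α) (h : 1 < 6) : ![a, b, c, d, e, f] ⟨1, h⟩ = b := rfl
@[simp] lemma cvm2 {α : Type*} (a b c d e f : α) (h : 2 < 6) : ![a, b, c, d, e, f] ⟨2, h⟩ = c := rfl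
@[simp] lemma cvm3 {α : Type*} (a b c d e f : α) (h : 3 < 6) : ![a, b, c, d, e, f] ⟨3, h⟩ = d := rfl
@[simp] lemma cvm4 {α : Type*} (a b c d e f : α) (h : 4 < 6) : ![a, b, c, d, e, f] ⟨4, h⟩ = e := rfl
@[simp] lemma cvm5 {α : Type*} (a b c d e f : α) (h : 5 < 6) : ![a, b, c, d, e, f] ⟨5, h⟩ = f := rfl

def vecF (n a b : ℕ) (v0 v1 : ℝ) : Fin 6 → ℝ :=
  ![dfun a b * v0 + ie a b * v1, ff n a b * v0, gg n a b * v0, 0, 0, 0]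

lemma step2 (n : ℕ) (X Y : Bool) (a b : ℕ) (ha : a < 2 ^ n) (hb : b < 2 ^ n) :
    Bcore X Y *ᵥ vec2 n a b = vec2 (n + 1) (cond X (2 ^ n) 0 + a) (cond Y (2 ^ n) 0 + b) := by
  funext i
  fin_cases i <;>
    simp only [Bcore, vec2, Matrix.of_apply, Matrix.mulVec, dotProduct, Fin.sum_univ_six,
      cv0, cv1, cv2, cv3, cv4, cv5, cvm0, cvm1, cvm2, cvm3, cvm4, cvm5, cvm0, cvm1, cvm2, cvm3, cvm4, cvm5, cvm0, cvm1, cvm2, cvm3, cvm4, cvm5,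
      ie_rec n X Y a b ha hb, dfun_rec n X Y a b ha hb, ff_rec n X Y a b ha hb,
      gg_rec n X Y a b ha hb] <;> ring

lemma stepF (n : ℕ) (X Y : Bool) (a b : ℕ) (ha : a < 2 ^ n) (hb : b < 2 ^ n) (v0 v1 : ℝ) :
    Fcore X Y *ᵥ vecF n a b v0 v1
      = vecF (n + 1) (cond X (2 ^ n) 0 + a) (cond Y (2 ^ n) 0 + b) v0 v1 := by
  funext i
  fin_cases i <;>
    simp only [Fcore, vecF, Matrix.of_apply, Matrix.mulVec, dotProduct, Fin.sum_univ_six,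
      cv0, cv1, cv2, cv3, cv4, cv5, cvm0, cvm1, cvm2, cvm3, cvm4, cvm5, cvm0, cvm1, cvm2, cvm3, cvm4, cvm5, cvm0, cvm1, cvm2, cvm3, cvm4, cvm5,
      ie_rec n X Y a b ha hb, dfun_rec n X Y a b ha hb, ff_rec n X Y a b ha hb,
      gg_rec n X Y a b ha hb] <;> ring

lemma stepC (X Y : Bool) (v : Fin 6 → ℝ) :
    Ccore X Y *ᵥ v = vecF 1 (cond X 1 0) (cond Y 1 0) (v 0) (v 1) := by
  funext i
  fin_cases i <;>
    cases X <;> cases Y <;>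
      simp only [Ccore, vecF, Matrix.of_apply, Matrix.mulVec, dotProduct, Fin.sum_univ_six,
        cv0, cv1, cv2, cv3, cv4, cv5, cvm0, cvm1, cvm2, cvm3, cvm4, cvm5, cvm0, cvm1, cvm2, cvm3, cvm4, cvm5, cvm0, cvm1, cvm2, cvm3, cvm4, cvm5, dfun, ie, ff, gg, db, s01, s10] <;>
      norm_num <;> ring

lemma key_split (n : ℕ) : ∀ m : ℕ, m < 2 ^ (n + 1) →
    m = cond (m.testBit n) (2 ^ n) 0 + m % 2 ^ n := by
  intro m hm
  rw [Nat.testBit_eq_decide_div_mod_eq]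
  have hd := Nat.div_add_mod m (2 ^ n)
  have hlt : m / 2 ^ n < 2 := Nat.div_lt_of_lt_mul (by rw [← pow_succ]; exact hm)
  generalize hq : m / 2 ^ n = q at *
  generalize hr : m % 2 ^ n = r at *
  generalize hN : (2 : ℕ) ^ n = N at *
  rcases (by omega : q = 0 ∨ q = 1) with h | h <;> subst h <;> simp at hd ⊢ <;> omega

lemma mod_bit (n p m : ℕ) (hp : p < n) : m.testBit p = (m % 2 ^ n).testBit p := by
  rw [Nat.testBit_mod_two_pow]; simp [hp]

lemma blk2 : ∀ n a b : ℕ, a < 2 ^ n → b < 2 ^ n →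
    (List.ofFn fun k : Fin n =>
        Bcore (a.testBit (n - 1 - (k : ℕ))) (b.testBit (n - 1 - (k : ℕ)))).prod *ᵥ wv
      = vec2 n a b := by
  intro n
  induction n with
  | zero =>
    intro a b ha hb
    have ha0 : a = 0 := by omega
    have hb0 : b = 0 := by omega
    subst ha0; subst hb0
    simp only [List.ofFn_zero, List.prod_nil, Matrix.one_mulVec]
    funext i
    fin_cases i <;> simp [wv, vec2, ie, dfun, ff, gg]
  | succ n ih =>
    intro a b ha hb
    have ha' : a % 2 ^ n < 2 ^ n := Nat.mod_lt _ (Nat.two_pow_pos n)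
    have hb' : b % 2 ^ n < 2 ^ n := Nat.mod_lt _ (Nat.two_pow_pos n)
    have htail : (fun k : Fin n =>
          Bcore (a.testBit (n + 1 - 1 - ((k.succ : ℕ)))) (b.testBit (n + 1 - 1 - ((k.succ : ℕ)))))
        = fun k : Fin n =>
          Bcore ((a % 2 ^ n).testBit (n - 1 - (k : ℕ))) ((b % 2 ^ n).testBit (n - 1 - (k : ℕ))) := by
      funext k
      have hk : (k : ℕ) < n := k.isLt
      have h1 : n + 1 - 1 - ((k : ℕ) + 1) = n - 1 - (k : ℕ) := by omega
      have h2 : n - 1 - (k : ℕ) < n := by omega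
      rw [Fin.val_succ, h1, mod_bit n _ a h2, mod_bit n _ b h2]
    rw [List.ofFn_succ, List.prod_cons, ← Matrix.mulVec_mulVec, htail,
      ih _ _ ha' hb']
    have h0 : n + 1 - 1 - ((0 : Fin (n + 1)) : ℕ) = n := by simp
    rw [h0, step2 n _ _ _ _ ha' hb', ← key_split n a ha, ← key_split n b hb]

lemma blk1 : ∀ n a b : ℕ, a < 2 ^ (n + 1) → b < 2 ^ (n + 1) → ∀ v : Fin 6 → ℝ,
    (List.ofFn fun k : Fin (n + 1) =>
        (if (k : ℕ) = n then Ccore else Fcore)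
          (a.testBit (n - (k : ℕ))) (b.testBit (n - (k : ℕ)))).prod *ᵥ v
      = vecF (n + 1) a b (v 0) (v 1) := by
  intro n
  induction n with
  | zero =>
    intro a b ha hb v
    simp only [List.ofFn_succ, List.ofFn_zero, List.prod_cons, List.prod_nil, mul_one]
    have h0 : ((0 : Fin 1) : ℕ) = 0 := rfl
    rw [h0]
    simp only [if_true, Nat.sub_zero]
    rw [stepC]
    have hA : cond (a.testBit 0) 1 0 = a := by
      rcases (by omega : a = 0 ∨ a = 1) with rfl | rfl <;> simp
    have hB : cond (b.testBit 0) 1 0 = b := by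
      rcases (by omega : b = 0 ∨ b = 1) with rfl | rfl <;> simp
    rw [hA, hB]
  | succ n ih =>
    intro a b ha hb v
    have ha' : a % 2 ^ (n + 1) < 2 ^ (n + 1) := Nat.mod_lt _ (Nat.two_pow_pos _)
    have hb' : b % 2 ^ (n + 1) < 2 ^ (n + 1) := Nat.mod_lt _ (Nat.two_pow_pos _)
    have htail : (fun k : Fin (n + 1) =>
          (if ((k.succ : ℕ)) = n + 1 then Ccore else Fcore)
            (a.testBit (n + 1 - (k.succ : ℕ))) (b.testBit (n + 1 - (k.succ : ℕ))))
        = fun k : Fin (n + 1) =>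
          (if (k : ℕ) = n then Ccore else Fcore)
            ((a % 2 ^ (n + 1)).testBit (n - (k : ℕ))) ((b % 2 ^ (n + 1)).testBit (n - (k : ℕ))) := by
      funext k
      have hk : (k : ℕ) < n + 1 := k.isLt
      have h1 : n + 1 - ((k : ℕ) + 1) = n - (k : ℕ) := by omega
      have h2 : n - (k : ℕ) < n + 1 := by omega
      rw [Fin.val_succ, h1, mod_bit (n + 1) _ a h2, mod_bit (n + 1) _ b h2]
      simp only [add_left_inj]
    rw [List.ofFn_succ, List.prod_cons, ← Matrix.mulVec_mulVec, htail,
      ih _ _ ha' hb' v]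
    have h0 : ((0 : Fin (n + 2)) : ℕ) = 0 := rfl
    rw [h0, if_neg (by omega : (0 : ℕ) ≠ n + 1), Nat.sub_zero]
    rw [stepF _ _ _ _ _ ha' hb', ← key_split (n + 1) a ha, ← key_split (n + 1) b hb]

lemma ofFn_split {α : Type*} {m n p : ℕ} (h : m = n + p) (f : Fin m → α) :
    List.ofFn f = (List.ofFn fun k : Fin n => f ⟨k, by omega⟩)
      ++ List.ofFn fun k : Fin p => f ⟨n + k, by omega⟩ := by
  subst h
  rw [List.ofFn_add]
  congr 1 <;> funext k <;> congr 1

end MPO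

def triD' (c : ℕ) (α β γ : ℝ) : Matrix (Fin (2 ^ c)) (Fin (2 ^ c)) ℝ :=
  Matrix.of fun i j =>
    if (i : ℕ) = (j : ℕ) then α
    else if (j : ℕ) = (i : ℕ) + 1 then β
    else if (i : ℕ) = (j : ℕ) + 1 then γ
    else 0

lemma triD_eq (m : ℕ) (i j : Fin (2 ^ m)) :
    triD' m (-2) 1 1 i j = MPO.dfun (i : ℕ) (j : ℕ) := by
  simp only [triD', Matrix.of_apply, MPO.dfun]
  split_ifs <;> norm_num <;> omega

lemma one_eq (m : ℕ) (i j : Fin m) :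
    (1 : Matrix (Fin m) (Fin m) ℝ) i j = MPO.ie (i : ℕ) (j : ℕ) := by
  rw [Matrix.one_apply]
  simp only [MPO.ie, Fin.ext_iff]

lemma idx2_val (c : ℕ) (p : Fin (2 ^ c) × Fin (2 ^ c)) :
    ((idx2 c p : ℕ)) = 2 ^ c * (p.1 : ℕ) + (p.2 : ℕ) := by
  simp [idx2, finProdFinEquiv]
  ring

theorem discrete_2d_laplacian_mpo_rank_six (c : ℕ) (hc : 2 ≤ c) :
    ∃ (u w : Fin 6 → ℝ) (M : Fin (2 * c) → Bool → Bool → Matrix (Fin 6) (Fin 6) ℝ),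
      ∀ i j : Fin (2 ^ (2 * c)),
        (Matrix.reindex (idx2 c) (idx2 c)
            (triD c (-2) 1 1 ⊗ₖ (1 : Matrix (Fin (2 ^ c)) (Fin (2 ^ c)) ℝ)
              + (1 : Matrix (Fin (2 ^ c)) (Fin (2 ^ c)) ℝ) ⊗ₖ triD c (-2) 1 1)) i j =
          u ⬝ᵥ ((List.ofFn fun k : Fin (2 * c) =>
              M k (Nat.testBit (i : ℕ) (2 * c - 1 - (k : ℕ)))
                  (Nat.testBit (j : ℕ) (2 * c - 1 - (k : ℕ)))).prod.mulVec w) := by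
  obtain ⟨c', rfl⟩ : ∃ c', c = c' + 1 := ⟨c - 1, by omega⟩
  refine ⟨![1, 0, 0, 0, 0, 0], MPO.wv,
    (fun k => if (k : ℕ) < (c' + 1) then
        (if (k : ℕ) = c' then MPO.Ccore else MPO.Fcore)
      else MPO.Bcore), ?_⟩
  intro i j
  obtain ⟨⟨i1, i2⟩, rfl⟩ := (idx2 (c' + 1)).surjective i
  obtain ⟨⟨j1, j2⟩, rfl⟩ := (idx2 (c' + 1)).surjective j
  rw [Matrix.reindex_apply, Matrix.submatrix_apply, Equiv.symm_apply_apply,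
    Equiv.symm_apply_apply]
  -- LHS
  have hLHS : (triD (c' + 1) (-2) 1 1 ⊗ₖ (1 : Matrix (Fin (2 ^ (c' + 1))) (Fin (2 ^ (c' + 1))) ℝ)
        + (1 : Matrix (Fin (2 ^ (c' + 1))) (Fin (2 ^ (c' + 1))) ℝ) ⊗ₖ triD (c' + 1) (-2) 1 1) (i1, i2) (j1, j2)
      = MPO.dfun i1 j1 * MPO.ie i2 j2 + MPO.ie i1 j1 * MPO.dfun i2 j2 := by
    have h1 : triD (c' + 1) (-2) 1 1 = triD' (c' + 1) (-2) 1 1 := rfl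
    rw [Matrix.add_apply, Matrix.kroneckerMap_apply, Matrix.kroneckerMap_apply,
      h1, triD_eq, triD_eq, one_eq, one_eq]
  rw [hLHS]
  -- bits
  have hbit : ∀ (a1 a2 : Fin (2 ^ (c' + 1))) (p : ℕ),
      ((idx2 (c' + 1) (a1, a2) : ℕ)).testBit p
        = if p < (c' + 1) then (a2 : ℕ).testBit p else (a1 : ℕ).testBit (p - (c' + 1)) := by
    intro a1 a2 p
    rw [idx2_val]
    exact Nat.testBit_two_pow_mul_add _ a2.isLt p
  -- split the product
  rw [MPO.ofFn_split (by omega : 2 * (c' + 1) = (c' + 1) + (c' + 1))]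
  rw [List.prod_append, ← Matrix.mulVec_mulVec]
  -- second block
  have h2nd : (List.ofFn fun k : Fin (c' + 1) =>
        (fun k : Fin (2 * (c' + 1)) => (if (k : ℕ) < (c' + 1) then
            (if (k : ℕ) = c' then MPO.Ccore else MPO.Fcore) else MPO.Bcore)
          (((idx2 (c' + 1) (i1, i2) : ℕ)).testBit (2 * (c' + 1) - 1 - (k : ℕ)))
          (((idx2 (c' + 1) (j1, j2) : ℕ)).testBit (2 * (c' + 1) - 1 - (k : ℕ)))) ⟨(c' + 1) + k, by omega⟩)
      = List.ofFn fun k : Fin (c' + 1) =>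
          MPO.Bcore ((i2 : ℕ).testBit ((c' + 1) - 1 - (k : ℕ))) ((j2 : ℕ).testBit ((c' + 1) - 1 - (k : ℕ))) := by
    congr 1
    funext k
    have hk : (k : ℕ) < (c' + 1) := k.isLt
    have hpos : 2 * (c' + 1) - 1 - ((c' + 1) + (k : ℕ)) = (c' + 1) - 1 - (k : ℕ) := by omega
    have hplt : (c' + 1) - 1 - (k : ℕ) < (c' + 1) := by omega
    simp only [hpos, hbit, if_pos hplt, if_neg (by omega : ¬ ((c' + 1) + (k : ℕ) < (c' + 1)))]
  rw [h2nd, MPO.blk2 (c' + 1) i2 j2 i2.isLt j2.isLt]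
  -- first block
  have h1st : (List.ofFn fun k : Fin (c' + 1) =>
        (fun k : Fin (2 * (c' + 1)) => (if (k : ℕ) < (c' + 1) then
            (if (k : ℕ) = c' then MPO.Ccore else MPO.Fcore) else MPO.Bcore)
          (((idx2 (c' + 1) (i1, i2) : ℕ)).testBit (2 * (c' + 1) - 1 - (k : ℕ)))
          (((idx2 (c' + 1) (j1, j2) : ℕ)).testBit (2 * (c' + 1) - 1 - (k : ℕ)))) ⟨k, by omega⟩)
      = List.ofFn fun k : Fin (c' + 1) =>
          (if (k : ℕ) = c' then MPO.Ccore else MPO.Fcore)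
            ((i1 : ℕ).testBit (c' - (k : ℕ))) ((j1 : ℕ).testBit (c' - (k : ℕ))) := by
    congr 1
    funext k
    have hk : (k : ℕ) < c' + 1 := k.isLt
    have hpos : 2 * (c' + 1) - 1 - (k : ℕ) - (c' + 1) = c' - (k : ℕ) := by omega
    simp only [hbit, if_neg (by omega : ¬ (2 * (c' + 1) - 1 - (k : ℕ) < c' + 1)),
      if_pos hk, hpos]
  rw [h1st, MPO.blk1 c' i1 j1 i1.isLt j1.isLt]
  simp only [MPO.vecF, MPO.vec2, MPO.cv0, MPO.cv1, dotProduct, Fin.sum_univ_six,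
    MPO.cv2, MPO.cv3, MPO.cv4, MPO.cv5]
  ring
end
end

section
/- Let c ≥ 1, N = 2^c, h > 0. Let W : {0,…,N+1} × {0,…,N+1} → ℝ be a grid function (interior values and boundary values) and f : {1,…,N} × {1,…,N} → ℝ. Define w ∈ ℝ^{N²} by w_{(j−1)N+i} = W_{i,j}, define F ∈ ℝ^{N²} by F_{(j−1)N+i} = f_{i,j}, and define the boundary vector b ∈ ℝ^{N²} by b_{(j−1)N+i} = [i=1]·W_{0,j} + [i=N]·W_{N+1,j} + [j=1]·W_{i,0} + [j=N]·W_{i,N+1} (Iverson brackets). Let A = Δ_DD ⊗ I_N + I_N ⊗ Δ_DD, where Δ_DD = D^{(c)}_{−2,1,1}. Then the five-point finite-difference equations (1/h²)(W_{i+1,j} + W_{i−1,j} + W_{i,j+1} + W_{i,j−1} − 4W_{i,j}) = f_{i,j} hold for all interior indices 1 ≤ i, j ≤ N if and only if A w = h² F − b. -/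
/-
Arrange the interior values in the matrix `U i j = W (i + 1) (j + 1)`. The flat vector `w` is the
column-major vectorization `vec U`, and `(Δ ⊗ₖ 1 + 1 ⊗ₖ Δ) *ᵥ vec U = vec (Δ * U + U * Δᵀ)`.
An entry of `Δ * U` (resp. `U * Δᵀ`) is the three-point second difference of `W` in `i`
(resp. `j`) with the neighbours lying on the boundary left out, so the linear system says,
entry by entry, that `h²` times the five-point equation holds after moving the boundary terms to
the right-hand side.
-/

open Matrix Kronecker
noncomputable section

theorem kronecker_one_add_one_kronecker_mulVec_vec {m n R : Type*} [Fintype m] [Fintype n]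
    [DecidableEq m] [DecidableEq n] [CommSemiring R]
    (A : Matrix n n R) (B : Matrix m m R) (X : Matrix m n R) :
    (A ⊗ₖ (1 : Matrix m m R) + (1 : Matrix n n R) ⊗ₖ B) *ᵥ vec X = vec (B * X + X * Aᵀ) := by
  rw [add_mulVec, kronecker_mulVec_vec, kronecker_mulVec_vec, vec_add, Matrix.one_mul,
    transpose_one, Matrix.mul_one, add_comm]

theorem reindex_mulVec_comp_symm {l m n o R : Type*} [Fintype n] [Fintype o]
    [NonUnitalNonAssocSemiring R] (e₁ : m ≃ l) (e₂ : n ≃ o) (M : Matrix m n R) (v : n → R) :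
    reindex e₁ e₂ M *ᵥ (v ∘ e₂.symm) = (M *ᵥ v) ∘ e₁.symm := by
  rw [reindex_apply, submatrix_mulVec_equiv, Equiv.symm_symm, Function.comp_assoc,
    e₂.symm_comp_self, Function.comp_id]

theorem triD_apply_eq_add (c : ℕ) (α β γ : ℝ) (i j : Fin (2 ^ c)) :
    triD c α β γ i j = (if (j : ℕ) = i then α else 0) + (if (j : ℕ) = i + 1 then β else 0)
      + (if (j : ℕ) + 1 = i then γ else 0) := by
  simp only [triD, of_apply]
  split_ifs <;> first | omega | simp

theorem triD_mulVec_comp_succ (c : ℕ) (α β γ : ℝ) (V : ℕ → ℝ) (i : Fin (2 ^ c)) :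
    (triD c α β γ *ᵥ fun k => V (k + 1)) i
      = γ * V i + α * V (i + 1) + β * V (i + 2)
        - γ * (if (i : ℕ) = 0 then V 0 else 0)
        - β * (if (i : ℕ) = 2 ^ c - 1 then V (2 ^ c + 1) else 0) := by
  have hi := i.isLt
  simp only [mulVec, dotProduct, triD_apply_eq_add, add_mul, Finset.sum_add_distrib, ite_mul,
    zero_mul]
  rw [Fin.sum_univ_eq_sum_range (fun k => if k = (i : ℕ) then α * V (k + 1) else 0),
    Fin.sum_univ_eq_sum_range (fun k => if k = (i : ℕ) + 1 then β * V (k + 1) else 0),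
    Fin.sum_univ_eq_sum_range (fun k => if k + 1 = (i : ℕ) then γ * V (k + 1) else 0),
    Finset.sum_ite_eq', Finset.sum_ite_eq']
  have hright : (if (i : ℕ) + 1 ∈ Finset.range (2 ^ c) then β * V (i + 1 + 1) else 0)
      = β * V (i + 2) - β * (if (i : ℕ) = 2 ^ c - 1 then V (2 ^ c + 1) else 0) := by
    by_cases h : (i : ℕ) + 1 < 2 ^ c
    · simp [h, show (i : ℕ) ≠ 2 ^ c - 1 by omega]
    · rw [if_neg (by simpa using h), if_pos (by omega), show 2 ^ c + 1 = (i : ℕ) + 2 by omega,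
        sub_self]
  have hleft : ∑ k ∈ Finset.range (2 ^ c), (if k + 1 = (i : ℕ) then γ * V (k + 1) else 0)
      = γ * V i - γ * (if (i : ℕ) = 0 then V 0 else 0) := by
    obtain h0 | ⟨m, hm⟩ : (i : ℕ) = 0 ∨ ∃ m, (i : ℕ) = m + 1 := by
      rcases (i : ℕ) with _ | m <;> simp
    · simp [h0]
    · simp [hm, show m < 2 ^ c by omega]
  rw [if_pos (Finset.mem_range.2 hi), hright, hleft]
  ring

def interiorGrid (n : ℕ) (W : ℕ → ℕ → ℝ) : Matrix (Fin n) (Fin n) ℝ :=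
  of fun i j => W (i + 1) (j + 1)

def dirichletBoundary (n : ℕ) (W : ℕ → ℕ → ℝ) : Matrix (Fin n) (Fin n) ℝ :=
  of fun i j =>
    (if (i : ℕ) = 0 then W 0 (j + 1) else 0)
      + (if (i : ℕ) = n - 1 then W (n + 1) (j + 1) else 0)
      + (if (j : ℕ) = 0 then W (i + 1) 0 else 0)
      + (if (j : ℕ) = n - 1 then W (i + 1) (n + 1) else 0)

theorem triD_mul_interiorGrid_add_apply (c : ℕ) (W : ℕ → ℕ → ℝ) (i j : Fin (2 ^ c)) :
    (triD c (-2) 1 1 * interiorGrid (2 ^ c) W + interiorGrid (2 ^ c) W * (triD c (-2) 1 1)ᵀ) i j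
      = W (i + 2) (j + 1) + W i (j + 1) + W (i + 1) (j + 2) + W (i + 1) j
          - 4 * W (i + 1) (j + 1) - dirichletBoundary (2 ^ c) W i j := by
  have hcol : (triD c (-2) 1 1 * interiorGrid (2 ^ c) W) i j
      = (triD c (-2) 1 1 *ᵥ fun k => W (k + 1) (j + 1)) i := rfl
  have hrow : (interiorGrid (2 ^ c) W * (triD c (-2) 1 1)ᵀ) i j
      = (triD c (-2) 1 1 *ᵥ fun k => W (i + 1) (k + 1)) j := by
    simp only [mul_apply, transpose_apply, mulVec, dotProduct, mul_comm]; rfl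
  rw [Matrix.add_apply, hcol, hrow, triD_mulVec_comp_succ c _ _ _ (W · (j + 1)),
    triD_mulVec_comp_succ c _ _ _ (W (i + 1))]
  simp only [dirichletBoundary, of_apply]
  ring

theorem five_point_fd_iff_linear_system_general (c : ℕ) (h : ℝ)
    (hh : 0 < h) (W : ℕ → ℕ → ℝ) (f : ℕ → ℕ → ℝ) :
    (∀ i j : Fin (2 ^ c),
        (1 / h ^ 2) *
            (W ((i : ℕ) + 2) ((j : ℕ) + 1) + W (i : ℕ) ((j : ℕ) + 1)
              + W ((i : ℕ) + 1) ((j : ℕ) + 2) + W ((i : ℕ) + 1) (j : ℕ)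
              - 4 * W ((i : ℕ) + 1) ((j : ℕ) + 1))
          = f ((i : ℕ) + 1) ((j : ℕ) + 1))
    ↔ (Matrix.reindex finProdFinEquiv finProdFinEquiv
          (triD c (-2) 1 1 ⊗ₖ (1 : Matrix (Fin (2 ^ c)) (Fin (2 ^ c)) ℝ)
            + (1 : Matrix (Fin (2 ^ c)) (Fin (2 ^ c)) ℝ) ⊗ₖ triD c (-2) 1 1)).mulVec
          (fun p : Fin (2 ^ c * 2 ^ c) =>
            W ((p : ℕ) % 2 ^ c + 1) ((p : ℕ) / 2 ^ c + 1))
        = fun p : Fin (2 ^ c * 2 ^ c) =>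
            h ^ 2 * f ((p : ℕ) % 2 ^ c + 1) ((p : ℕ) / 2 ^ c + 1)
            - ((if (p : ℕ) % 2 ^ c = 0 then W 0 ((p : ℕ) / 2 ^ c + 1) else 0)
              + (if (p : ℕ) % 2 ^ c = 2 ^ c - 1
                  then W (2 ^ c + 1) ((p : ℕ) / 2 ^ c + 1) else 0)
              + (if (p : ℕ) / 2 ^ c = 0 then W ((p : ℕ) % 2 ^ c + 1) 0 else 0)
              + (if (p : ℕ) / 2 ^ c = 2 ^ c - 1
                  then W ((p : ℕ) % 2 ^ c + 1) (2 ^ c + 1) else 0)) := by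
  -- Both flat vectors are `vec` of a grid matrix read through `finProdFinEquiv.symm`, by `rfl`.
  change _ ↔ reindex _ _ _ *ᵥ (vec (interiorGrid (2 ^ c) W) ∘ finProdFinEquiv.symm)
    = vec (h ^ 2 • interiorGrid (2 ^ c) f - dirichletBoundary (2 ^ c) W) ∘ finProdFinEquiv.symm
  rw [reindex_mulVec_comp_symm, kronecker_one_add_one_kronecker_mulVec_vec,
    finProdFinEquiv.symm.surjective.injective_comp_right.eq_iff, vec_inj, ← Matrix.ext_iff]
  refine forall₂_congr fun i j => ?_
  rw [triD_mul_interiorGrid_add_apply, Matrix.sub_apply, sub_left_inj, Matrix.smul_apply, one_div,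
    inv_mul_eq_iff_eq_mul₀ (by positivity), mul_comm]
  rfl

theorem five_point_fd_iff_linear_system (c : ℕ) (hc : 1 ≤ c) (h : ℝ)
    (hh : 0 < h) (W : ℕ → ℕ → ℝ) (f : ℕ → ℕ → ℝ) :
    (∀ i j : Fin (2 ^ c),
        (1 / h ^ 2) *
            (W ((i : ℕ) + 2) ((j : ℕ) + 1) + W (i : ℕ) ((j : ℕ) + 1)
              + W ((i : ℕ) + 1) ((j : ℕ) + 2) + W ((i : ℕ) + 1) (j : ℕ)
              - 4 * W ((i : ℕ) + 1) ((j : ℕ) + 1))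
          = f ((i : ℕ) + 1) ((j : ℕ) + 1))
    ↔ (Matrix.reindex finProdFinEquiv finProdFinEquiv
          (triD c (-2) 1 1 ⊗ₖ (1 : Matrix (Fin (2 ^ c)) (Fin (2 ^ c)) ℝ)
            + (1 : Matrix (Fin (2 ^ c)) (Fin (2 ^ c)) ℝ) ⊗ₖ triD c (-2) 1 1)).mulVec
          (fun p : Fin (2 ^ c * 2 ^ c) =>
            W ((p : ℕ) % 2 ^ c + 1) ((p : ℕ) / 2 ^ c + 1))
        = fun p : Fin (2 ^ c * 2 ^ c) =>
            h ^ 2 * f ((p : ℕ) % 2 ^ c + 1) ((p : ℕ) / 2 ^ c + 1)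
            - ((if (p : ℕ) % 2 ^ c = 0 then W 0 ((p : ℕ) / 2 ^ c + 1) else 0)
              + (if (p : ℕ) % 2 ^ c = 2 ^ c - 1
                  then W (2 ^ c + 1) ((p : ℕ) / 2 ^ c + 1) else 0)
              + (if (p : ℕ) / 2 ^ c = 0 then W ((p : ℕ) % 2 ^ c + 1) 0 else 0)
              + (if (p : ℕ) / 2 ^ c = 2 ^ c - 1
                  then W ((p : ℕ) % 2 ^ c + 1) (2 ^ c + 1) else 0)) :=
  five_point_fd_iff_linear_system_general c h hh W f
end
end
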